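/- arXiv:2510.25811 — 5 statements merged into one kernel-verified Lean document; each statement's English description precedes it below -/
import Mathlib

section
/- Let η ≥ 0 be a nonnegative vector, let k ≠ k*(μ) and suppose k ∈ N(μ) or |M(μ)| < m. Assume that for each arm j the divergence map λ_j ↦ d_j(μ_j, λ_j) is continuous, equals 0 at λ_j = μ_j, is strictly decreasing on (−∞, μ_j] and strictly increasing on [μ_j, ∞). Then inf over λ ∈ B_k(m,μ) of η^⊤ d(μ,λ) equals η_k · d_k(μ_k, μ*), where d(μ,λ) = (d_j(μ_j,λ_j))_j. -/
/-! Raising arm `k` of `μ` to any level `v > μ*` gives a point of `B_k(m,μ)`: the only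
possible new mode is `k` itself, and it either replaces an existing mode (`k` or a neighbour of
`k` was a mode of `μ`) or fits into the spare budget (`|M(μ)| < m`). Its cost is
`η_k d_k(μ_k, v)`, which tends to `η_k d_k(μ_k, μ*)` as `v ↓ μ*`. Conversely every `λ ∈ B_k(m,μ)`
has `λ_k > λ_{k*} = μ* ≥ μ_k`, so monotonicity of `d_k(μ_k, ·)` on `[μ_k, ∞)` bounds its cost
below by the same quantity. -/

def IsMode {K : ℕ} (G : SimpleGraph (Fin K)) (lam : Fin K → ℝ) (k : Fin K) : Prop :=
  ∀ l, G.Adj k l → lam l < lam k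

def AtMostModal {K : ℕ} (G : SimpleGraph (Fin K)) (m : ℕ) : Set (Fin K → ℝ) :=
  {lam | {k | IsMode G lam k}.ncard ≤ m}

/-- `N(μ)`: the set of modes of `μ` together with their neighbors. -/
def ModeNeighborhood {K : ℕ} (G : SimpleGraph (Fin K)) (mu : Fin K → ℝ) : Set (Fin K) :=
  {j | IsMode G mu j ∨ ∃ i, IsMode G mu i ∧ G.Adj i j}

/-- `B_k(m,μ)`: confusing parameters whose unique argmax is `k`. -/
def ConfusingSetAt {K : ℕ} (G : SimpleGraph (Fin K)) (m : ℕ) (mu : Fin K → ℝ)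
    (kstar k : Fin K) : Set (Fin K → ℝ) :=
  {lam | lam ∈ AtMostModal G m ∧ lam kstar = mu kstar ∧ ∀ i, i ≠ k → lam i < lam k}

open Function Set

section Modes

variable {K m : ℕ} (G : SimpleGraph (Fin K)) {mu : Fin K → ℝ} {k : Fin K} {v : ℝ}

lemma modes_update_subset (hv : ∀ j, j ≠ k → mu j < v) :
    {j | IsMode G (update mu k v) j} ⊆ insert k {j | IsMode G mu j ∧ ¬ G.Adj k j} := by
  intro j hj
  rcases eq_or_ne j k with rfl | hjk
  · exact mem_insert _ _
  have hj' : ∀ l, G.Adj j l → update mu k v l < mu j := fun l hl => by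
    simpa [update_of_ne hjk] using hj l hl
  refine mem_insert_of_mem _ ⟨fun l hl => ?_, fun hkj => ?_⟩
  · have hlk : l ≠ k := by
      rintro rfl
      simpa using (hj' _ hl).trans (hv j hjk)
    simpa [update_of_ne hlk] using hj' l hl
  · simpa using (hj' k hkj.symm).trans (hv j hjk)

lemma ncard_insert_modes_not_adj_le (hk : k ∈ ModeNeighborhood G mu) :
    (insert k {j | IsMode G mu j ∧ ¬ G.Adj k j}).ncard ≤ {j | IsMode G mu j}.ncard := by
  rcases hk with hk | ⟨i, hi, hik⟩
  · exact ncard_le_ncard (insert_subset hk fun j hj => hj.1) (toFinite _)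
  · -- the mode `i` adjacent to `k` makes room for `k`
    have hsub : {j | IsMode G mu j ∧ ¬ G.Adj k j} ⊆ {j | IsMode G mu j} \ {i} :=
      fun j hj => ⟨hj.1, fun hji => hj.2 (hji ▸ hik.symm)⟩
    have hpos : 0 < {j | IsMode G mu j}.ncard := (ncard_pos (toFinite _)).2 ⟨i, hi⟩
    calc (insert k {j | IsMode G mu j ∧ ¬ G.Adj k j}).ncard
        ≤ ({j | IsMode G mu j} \ {i}).ncard + 1 :=
          (ncard_insert_le _ _).trans (Nat.add_le_add_right (ncard_le_ncard hsub (toFinite _)) 1)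
      _ = {j | IsMode G mu j}.ncard := by
          rw [ncard_sdiff_singleton_of_mem hi]; omega

lemma update_mem_atMostModal (hmu : mu ∈ AtMostModal G m)
    (hcase : k ∈ ModeNeighborhood G mu ∨ {j | IsMode G mu j}.ncard < m)
    (hv : ∀ j, j ≠ k → mu j < v) :
    update mu k v ∈ AtMostModal G m := by
  have hle := ncard_le_ncard (modes_update_subset G hv) (toFinite _)
  show {j | IsMode G (update mu k v) j}.ncard ≤ m
  rcases hcase with hN | hlt
  · exact hle.trans ((ncard_insert_modes_not_adj_le G hN).trans hmu)
  · have hsub : {j | IsMode G mu j ∧ ¬ G.Adj k j} ⊆ {j | IsMode G mu j} := fun j hj => hj.1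
    have := (ncard_insert_le k _).trans (Nat.add_le_add_right (ncard_le_ncard hsub (toFinite _)) 1)
    omega

lemma update_mem_confusingSetAt {kstar : Fin K} (hmu : mu ∈ AtMostModal G m)
    (hkstar : ∀ j, j ≠ kstar → mu j < mu kstar) (hk : k ≠ kstar)
    (hcase : k ∈ ModeNeighborhood G mu ∨ {j | IsMode G mu j}.ncard < m)
    (hv : mu kstar < v) :
    update mu k v ∈ ConfusingSetAt G m mu kstar k := by
  have hlt : ∀ j, mu j < v := fun j => by
    rcases eq_or_ne j kstar with rfl | hj
    · exact hv
    · exact (hkstar j hj).trans hv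
  refine ⟨update_mem_atMostModal G hmu hcase fun j _ => hlt j, update_of_ne hk.symm _ _,
    fun i hi => ?_⟩
  simpa [update_of_ne hi] using hlt i

end Modes

section Cost

variable {K : ℕ} (η : Fin K → ℝ) (d : Fin K → ℝ → ℝ → ℝ) (mu : Fin K → ℝ)

lemma sum_mul_update_eq (hdzero : ∀ j (x : ℝ), d j x x = 0) (k : Fin K) (v : ℝ) :
    ∑ j, η j * d j (mu j) (update mu k v j) = η k * d k (mu k) v := by
  rw [Finset.sum_eq_single_of_mem k (Finset.mem_univ k) fun j _ hj => by
    rw [update_of_ne hj, hdzero, mul_zero], update_self]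

lemma mul_le_sum_of_mem_confusingSetAt {m : ℕ} {G : SimpleGraph (Fin K)} {kstar k : Fin K}
    {lam : Fin K → ℝ} (hη : ∀ j, 0 ≤ η j) (hd0 : ∀ j x y, 0 ≤ d j x y)
    (hdmono : StrictMonoOn (d k (mu k)) (Ici (mu k)))
    (hk : k ≠ kstar) (hmuk : mu k ≤ mu kstar) (hlam : lam ∈ ConfusingSetAt G m mu kstar k) :
    η k * d k (mu k) (mu kstar) ≤ ∑ j, η j * d j (mu j) (lam j) := by
  obtain ⟨-, hks, hmax⟩ := hlam
  have hlk : mu kstar < lam k := hks ▸ hmax kstar hk.symm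
  calc η k * d k (mu k) (mu kstar)
      ≤ η k * d k (mu k) (lam k) := mul_le_mul_of_nonneg_left
        (hdmono.monotoneOn hmuk (hmuk.trans hlk.le) hlk.le) (hη k)
    _ ≤ ∑ j, η j * d j (mu j) (lam j) :=
        Finset.single_le_sum (fun j _ => mul_nonneg (hη j) (hd0 j _ _)) (Finset.mem_univ k)

end Cost

lemma csInf_le_of_continuousWithinAt_Ioi {S : Set ℝ} {f : ℝ → ℝ} {a : ℝ} (hS : BddBelow S)
    (hf : ContinuousWithinAt f (Ioi a) a) (hmem : ∀ x, a < x → f x ∈ S) :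
    sInf S ≤ f a :=
  ge_of_tendsto hf (eventually_nhdsWithin_of_forall fun x hx => csInf_le hS (hmem x hx))

theorem inf_confusingSetAt_trivial_case_general {K m : ℕ} (G : SimpleGraph (Fin K))
    (mu : Fin K → ℝ) (kstar : Fin K)
    (hmu : mu ∈ AtMostModal G m)
    (hkstar : ∀ j, j ≠ kstar → mu j < mu kstar)
    (k : Fin K) (hk : k ≠ kstar)
    (hcase : k ∈ ModeNeighborhood G mu ∨ {j | IsMode G mu j}.ncard < m)
    (η : Fin K → ℝ) (hη : ∀ j, 0 ≤ η j)
    (d : Fin K → ℝ → ℝ → ℝ)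
    (hd0 : ∀ j x y, 0 ≤ d j x y)
    (hdcont : ∀ j, Continuous (d j (mu j)))
    (hdzero : ∀ j (x : ℝ), d j x x = 0)
    (hdmono : ∀ j (x : ℝ), StrictMonoOn (d j x) (Set.Ici x)) :
    sInf ((fun lam => ∑ j, η j * d j (mu j) (lam j)) '' ConfusingSetAt G m mu kstar k)
      = η k * d k (mu k) (mu kstar) := by
  have hmem : ∀ v, mu kstar < v → update mu k v ∈ ConfusingSetAt G m mu kstar k :=
    fun v hv => update_mem_confusingSetAt G hmu hkstar hk hcase hv
  have hbdd : BddBelow ((fun lam => ∑ j, η j * d j (mu j) (lam j)) ''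
      ConfusingSetAt G m mu kstar k) :=
    ⟨0, forall_mem_image.2 fun lam _ =>
      Finset.sum_nonneg fun j _ => mul_nonneg (hη j) (hd0 j _ _)⟩
  apply le_antisymm
  · refine csInf_le_of_continuousWithinAt_Ioi (f := fun v => η k * d k (mu k) v) hbdd
      ((hdcont k).const_mul (η k)).continuousWithinAt fun v hv => ?_
    exact ⟨update mu k v, hmem v hv, sum_mul_update_eq η d mu hdzero k v⟩
  · exact le_csInf ⟨_, mem_image_of_mem _ (hmem _ (lt_add_one _))⟩ <| forall_mem_image.2
      fun lam hlam => mul_le_sum_of_mem_confusingSetAt η d mu hη hd0 (hdmono k (mu k)) hk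
        (hkstar k hk).le hlam

/-- If `k ∈ N(μ)` or `μ` has fewer than `m` modes, then
`inf_{λ ∈ B_k(m,μ)} η^⊤ d(μ,λ) = η_k d_k(μ_k, μ*)`. -/
theorem inf_confusingSetAt_trivial_case {K m : ℕ} (G : SimpleGraph (Fin K))
    (mu : Fin K → ℝ) (kstar : Fin K)
    (hmu : mu ∈ AtMostModal G m)
    (hkstar : ∀ j, j ≠ kstar → mu j < mu kstar)
    (k : Fin K) (hk : k ≠ kstar)
    (hcase : k ∈ ModeNeighborhood G mu ∨ {j | IsMode G mu j}.ncard < m)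
    (η : Fin K → ℝ) (hη : ∀ j, 0 ≤ η j)
    (d : Fin K → ℝ → ℝ → ℝ)
    (hd0 : ∀ j x y, 0 ≤ d j x y)
    (hdcont : ∀ j, Continuous (d j (mu j)))
    (hdzero : ∀ j (x : ℝ), d j x x = 0)
    (hdanti : ∀ j (x : ℝ), StrictAntiOn (d j x) (Set.Iic x))
    (hdmono : ∀ j (x : ℝ), StrictMonoOn (d j x) (Set.Ici x)) :
    sInf ((fun lam => ∑ j, η j * d j (mu j) (lam j)) '' ConfusingSetAt G m mu kstar k)
      = η k * d k (mu k) (mu kstar) :=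
  inf_confusingSetAt_trivial_case_general G mu kstar hmu hkstar k hk hcase η hη d hd0 hdcont hdzero
    hdmono
end

section
/- Let λ ∈ ℝ^K, let G be a graph on [K], and let S be a connected component of the graph G' = ([K], E') where (i,j) ∈ E' iff (i,j) ∈ E and λ_i = λ_j. Let δ = min{|λ_i − λ_j| : (i,j) ∈ E, λ_i ≠ λ_j} > 0 and 0 < ε < δ. Define λ' by λ'_i = λ_i − ε·1{i ∈ S}. Then the set of modes of λ' equals the set of modes of λ. -/
/-- The graph `G' = ([K],E')` with `(i,j) ∈ E'` iff `(i,j) ∈ E` and `λ_i = λ_j`. -/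
def levelGraph {K : ℕ} (G : SimpleGraph (Fin K)) (lam : Fin K → ℝ) : SimpleGraph (Fin K) where
  Adj i j := G.Adj i j ∧ lam i = lam j
  symm := ⟨fun i j h => ⟨G.symm.symm i j h.1, h.2.symm⟩⟩
  loopless := ⟨fun i h => G.loopless.irrefl i h.1⟩

/-! Subtracting a shift `c` from `λ` preserves the comparison `λ_ℓ < λ_k` along every edge `kℓ`
as soon as `c` is constant across edges of equal level and varies by less than `δ` across
edges of distinct levels, since those levels are at least `δ` apart. The indicator of `ε` on a
component of the level graph is such a shift. -/

lemma sub_lt_sub_iff_of_abs_sub_lt {a b s t δ : ℝ} (hgap : a ≠ b → δ ≤ |a - b|)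
    (hlevel : a = b → s = t) (hst : |s - t| < δ) :
    b - t < a - s ↔ b < a := by
  rcases eq_or_ne a b with rfl | hne
  · simp [hlevel rfl]
  · have hδ := hgap hne
    rcases abs_cases (a - b) with ⟨habs, _⟩ | ⟨habs, _⟩ <;>
      rcases abs_cases (s - t) with ⟨hst', _⟩ | ⟨hst', _⟩ <;>
      rw [habs] at hδ <;> rw [hst'] at hst <;> constructor <;> intro h <;> linarith

theorem isMode_sub_iff {K : ℕ} {G : SimpleGraph (Fin K)} {lam c : Fin K → ℝ} {δ : ℝ}
    (hgap : ∀ i j, G.Adj i j → lam i ≠ lam j → δ ≤ |lam i - lam j|)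
    (hlevel : ∀ i j, (levelGraph G lam).Adj i j → c i = c j)
    (hc : ∀ i j, G.Adj i j → |c i - c j| < δ) (k : Fin K) :
    IsMode G (lam - c) k ↔ IsMode G lam k :=
  forall_congr' fun l => imp_congr_right fun hkl =>
    sub_lt_sub_iff_of_abs_sub_lt (hgap k l hkl) (fun h => hlevel k l ⟨hkl, h⟩) (hc k l hkl)

lemma abs_ite_sub_ite_lt {p q : Prop} [Decidable p] [Decidable q] {ε δ : ℝ}
    (hε : 0 < ε) (hεδ : ε < δ) :
    |(if p then ε else 0) - (if q then ε else 0)| < δ := by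
  split_ifs <;> simp [abs_of_pos hε] <;> linarith

open Classical in
theorem modes_invariant_under_component_shift_general {K : ℕ} (G : SimpleGraph (Fin K))
    (lam : Fin K → ℝ) (S : Set (Fin K))
    (hS : ∃ v, S = ((levelGraph G lam).connectedComponentMk v).supp)
    (δ : ℝ)
    (hδle : ∀ i j, G.Adj i j → lam i ≠ lam j → δ ≤ |lam i - lam j|)
    (ε : ℝ) (hε : 0 < ε) (hεδ : ε < δ)
    (lam' : Fin K → ℝ)
    (hlam' : ∀ i, lam' i = lam i - (if i ∈ S then ε else 0)) :
    {i | IsMode G lam' i} = {i | IsMode G lam i} := by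
  obtain rfl : lam' = lam - fun i => if i ∈ S then ε else 0 := funext hlam'
  refine Set.ext fun k => isMode_sub_iff hδle (fun i j hij => ?_)
    (fun i j _ => abs_ite_sub_ite_lt hε hεδ) k
  have hmem : i ∈ S ↔ j ∈ S := by
    obtain ⟨v, rfl⟩ := hS
    exact ((levelGraph G lam).connectedComponentMk v).mem_supp_congr_adj hij
  exact if_congr hmem rfl rfl

open Classical in
/-- Lowering by `ε < δ` all entries of `λ` on a connected component `S` of the level
graph `G'` leaves the set of modes unchanged. -/
theorem modes_invariant_under_component_shift {K : ℕ} (G : SimpleGraph (Fin K))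
    (lam : Fin K → ℝ) (S : Set (Fin K))
    (hS : ∃ v, S = ((levelGraph G lam).connectedComponentMk v).supp)
    (hE : ∃ i j, G.Adj i j)
    (δ : ℝ) (hδpos : 0 < δ)
    (hδmin : ∃ i j, G.Adj i j ∧ lam i ≠ lam j ∧ δ = |lam i - lam j|)
    (hδle : ∀ i j, G.Adj i j → lam i ≠ lam j → δ ≤ |lam i - lam j|)
    (ε : ℝ) (hε : 0 < ε) (hεδ : ε < δ)
    (lam' : Fin K → ℝ)
    (hlam' : ∀ i, lam' i = lam i - (if i ∈ S then ε else 0)) :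
    {i | IsMode G lam' i} = {i | IsMode G lam i} :=
  modes_invariant_under_component_shift_general G lam S hS δ hδle ε hε hεδ lam' hlam'
end

section
/- Let λ* minimize λ ↦ η^⊤ d(μ,λ) over the set B'_k(m,μ) = {λ ∈ [μ_⋆, μ*]^K ∩ F_{≤m} : λ_k = λ_{k*(μ)} = μ*}, where k ∉ N(μ). Assume each d_j(μ_j, ·) is strictly decreasing below μ_j, strictly increasing above μ_j, and vanishes at μ_j, and η > 0 componentwise. Then every mode of λ* other than k is a mode of μ, i.e., M(λ*) ⊆ M(μ) ∪ {k}. -/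
/-- `B'_k(m,μ) = {λ ∈ [μ_⋆,μ*]^K ∩ F_{≤m} : λ_k = λ_{k*(μ)} = μ*}`. -/
def CompactConfusingSetAt {K : ℕ} (G : SimpleGraph (Fin K)) (m : ℕ) (mu : Fin K → ℝ)
    (mlo mhi : ℝ) (kstar k : Fin K) : Set (Fin K → ℝ) :=
  {lam | (∀ i, lam i ∈ Set.Icc mlo mhi) ∧ lam ∈ AtMostModal G m ∧
    lam k = mhi ∧ lam kstar = mhi}

/-!
Suppose `i ≠ k` is a mode of `λ*` but not of `μ`, say `μ_{l₀} ≥ μ_i` for a neighbour `l₀`.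
Since `λ*_k = λ*_{k*} = μ*` is the largest value allowed, `i` is not adjacent to `k` or `k*`.
Let `M` be the largest value of `λ*` on the neighbours of `i`. If `μ_i ≤ M`, lower `λ*_i` to `M`;
otherwise set both `λ*_i` and `λ*_{l₀}` to `μ_i`. In either case `i` ties with a neighbour, so no
new mode appears and the new point stays in `B'_k(m, μ)`; and every coordinate moves towards `μ`,
one of them strictly, so the weighted divergence drops, contradicting the minimality of `λ*`.
-/

open Set Function

section Between

variable {α β : Type*} [LinearOrder α] [Preorder β] {f : α → β} {x y z : α}

theorem apply_lt_of_mem_uIcc_of_ne (hanti : StrictAntiOn f (Iic x)) (hmono : StrictMonoOn f (Ici x))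
    (hz : z ∈ uIcc x y) (hzy : z ≠ y) : f z < f y := by
  rcases mem_uIcc.mp hz with ⟨hxz, hzy'⟩ | ⟨hyz, hzx⟩
  · exact hmono hxz (hxz.trans hzy') (hzy'.lt_of_ne hzy)
  · exact hanti (hyz.trans hzx) hzx (hyz.lt_of_ne hzy.symm)

theorem apply_le_of_mem_uIcc (hanti : StrictAntiOn f (Iic x)) (hmono : StrictMonoOn f (Ici x))
    (hz : z ∈ uIcc x y) : f z ≤ f y := by
  rcases eq_or_ne z y with rfl | hzy
  · exact le_rfl
  · exact (apply_lt_of_mem_uIcc_of_ne hanti hmono hz hzy).le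

end Between

theorem weighted_sum_lt_of_mem_uIcc {ι : Type*} [Fintype ι] {η : ι → ℝ} (hη : ∀ j, 0 < η j)
    {d : ι → ℝ → ℝ → ℝ} (hdanti : ∀ j x, StrictAntiOn (d j x) (Iic x))
    (hdmono : ∀ j x, StrictMonoOn (d j x) (Ici x)) {mu lam lam' : ι → ℝ}
    (hbetween : ∀ j, lam' j ∈ uIcc (mu j) (lam j)) (hne : lam' ≠ lam) :
    ∑ j, η j * d j (mu j) (lam' j) < ∑ j, η j * d j (mu j) (lam j) := by
  obtain ⟨j₀, hj₀⟩ := ne_iff.mp hne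
  refine Finset.sum_lt_sum (fun j _ => ?_) ⟨j₀, Finset.mem_univ _, ?_⟩
  · exact mul_le_mul_of_nonneg_left
      (apply_le_of_mem_uIcc (hdanti j _) (hdmono j _) (hbetween j)) (hη j).le
  · exact mul_lt_mul_of_pos_left
      (apply_lt_of_mem_uIcc_of_ne (hdanti j₀ _) (hdmono j₀ _) (hbetween j₀) hj₀) (hη j₀)

section Flatten

variable {K : ℕ} {G : SimpleGraph (Fin K)} {lam : Fin K → ℝ} {i l : Fin K} {v : ℝ}

def flattenAt (lam : Fin K → ℝ) (i l : Fin K) (v : ℝ) : Fin K → ℝ :=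
  fun j => if j = i ∨ j = l then v else lam j

theorem flattenAt_of_not (lam : Fin K → ℝ) {j : Fin K} (hj : ¬(j = i ∨ j = l)) :
    flattenAt lam i l v j = lam j :=
  if_neg hj

theorem not_adj_of_isMode_of_le {j : Fin K} (hi : IsMode G lam i) (hij : lam i ≤ lam j) :
    ¬G.Adj i j :=
  fun h => (hi j h).not_ge hij

/-- `i` and `l` tie, the other neighbours of `i` lie below `v`, and every other vertex only sees
its neighbours go up. -/
theorem setOf_isMode_flattenAt_subset (hil : G.Adj i l) (hv : ∀ j, G.Adj i j → lam j ≤ v) :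
    {j | IsMode G (flattenAt lam i l v) j} ⊆ {j | IsMode G lam j} := by
  rintro j (hj : IsMode G _ j)
  show IsMode G lam j
  by_cases hjil : j = i ∨ j = l
  · obtain ⟨p, hjp, hp⟩ : ∃ p, G.Adj j p ∧ (p = i ∨ p = l) := by
      rcases hjil with rfl | rfl
      exacts [⟨l, hil, Or.inr rfl⟩, ⟨i, hil.symm, Or.inl rfl⟩]
    have := hj p hjp
    simp only [flattenAt, if_pos hp, if_pos hjil, lt_self_iff_false] at this
  by_cases hij : G.Adj i j
  · have := hj i hij.symm
    simp only [flattenAt, if_neg hjil] at this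
    exact absurd (hv j hij) this.not_ge
  intro n hjn
  have hni : n ≠ i := by rintro rfl; exact hij hjn.symm
  have hlift : lam n ≤ flattenAt lam i l v n := by
    by_cases hnl : n = l
    · subst hnl; simpa [flattenAt] using hv n hil
    · rw [flattenAt_of_not lam (by tauto)]
  have := hj n hjn
  rw [flattenAt_of_not lam hjil] at this
  exact hlift.trans_lt this

theorem flattenAt_mem_uIcc {mu : Fin K → ℝ} (hvi : v ∈ uIcc (mu i) (lam i))
    (hvl : v ∈ uIcc (mu l) (lam l)) (j : Fin K) :
    flattenAt lam i l v j ∈ uIcc (mu j) (lam j) := by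
  unfold flattenAt
  split_ifs with hj
  · rcases hj with rfl | rfl <;> assumption
  · exact right_mem_uIcc

theorem flattenAt_mem_compactConfusingSetAt {m : ℕ} {mu : Fin K → ℝ} {mlo mhi : ℝ}
    {kstar k : Fin K} (hlam : lam ∈ CompactConfusingSetAt G m mu mlo mhi kstar k)
    (hil : G.Adj i l) (hv : ∀ j, G.Adj i j → lam j ≤ v) (hvbox : v ∈ Icc mlo mhi)
    (hk : ¬(k = i ∨ k = l)) (hkstar : ¬(kstar = i ∨ kstar = l)) :
    flattenAt lam i l v ∈ CompactConfusingSetAt G m mu mlo mhi kstar k := by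
  obtain ⟨hbox, hmodal, hlamk, hlamkstar⟩ := hlam
  refine ⟨fun j => ?_, ?_, by rwa [flattenAt_of_not lam hk], by rwa [flattenAt_of_not lam hkstar]⟩
  · unfold flattenAt
    split_ifs
    exacts [hvbox, hbox j]
  · exact (ncard_le_ncard (setOf_isMode_flattenAt_subset hil hv) (toFinite _)).trans hmodal

end Flatten

theorem exists_closer_of_isMode_of_not_isMode {K m : ℕ} {G : SimpleGraph (Fin K)}
    {mu : Fin K → ℝ} {kstar : Fin K} {mlo mhi : ℝ} (hkstar : ∀ j, j ≠ kstar → mu j < mu kstar)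
    (hmhi : mhi = mu kstar) (hmlo : ∀ i, mlo ≤ mu i) {k : Fin K} {lam : Fin K → ℝ}
    (hlam : lam ∈ CompactConfusingSetAt G m mu mlo mhi kstar k) {i : Fin K}
    (hi : IsMode G lam i) (hik : i ≠ k) (himu : ¬IsMode G mu i) :
    ∃ lam' ∈ CompactConfusingSetAt G m mu mlo mhi kstar k,
      (∀ j, lam' j ∈ uIcc (mu j) (lam j)) ∧ lam' ≠ lam := by
  classical
  have ⟨hbox, _, hlamk, hlamkstar⟩ := hlam
  have hikstar : i ≠ kstar := by
    rintro rfl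
    exact himu fun l hl => hkstar l (G.ne_of_adj hl).symm
  have hik_nadj : ¬G.Adj i k := not_adj_of_isMode_of_le hi (hlamk ▸ (hbox i).2)
  have hikstar_nadj : ¬G.Adj i kstar := not_adj_of_isMode_of_le hi (hlamkstar ▸ (hbox i).2)
  have hfar : ∀ l, G.Adj i l → ¬(k = i ∨ k = l) ∧ ¬(kstar = i ∨ kstar = l) := by
    rintro l hil
    constructor <;> rintro (rfl | rfl) <;> contradiction
  simp only [IsMode, not_forall, not_lt] at himu
  obtain ⟨l₀, hil₀, hmu_le⟩ := himu
  obtain ⟨l₁, hl₁, hmax⟩ :=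
    Finset.exists_max_image (Finset.univ.filter (G.Adj i)) lam ⟨l₀, by simpa using hil₀⟩
  have hil₁ : G.Adj i l₁ := by simpa using hl₁
  have hv : ∀ j, G.Adj i j → lam j ≤ lam l₁ := fun j hj => hmax j (by simpa using hj)
  have hlt : lam l₁ < lam i := hi l₁ hil₁
  rcases le_or_gt (mu i) (lam l₁) with hcase | hcase
  · refine ⟨flattenAt lam i l₁ (lam l₁),
      flattenAt_mem_compactConfusingSetAt hlam hil₁ hv (hbox l₁) (hfar l₁ hil₁).1 (hfar l₁ hil₁).2,
      flattenAt_mem_uIcc (mem_uIcc.mpr (Or.inl ⟨hcase, hlt.le⟩)) right_mem_uIcc,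
      fun h => hlt.ne ?_⟩
    simpa [flattenAt] using congrFun h i
  · have hl₀ : lam l₀ < mu i := (hv l₀ hil₀).trans_lt hcase
    refine ⟨flattenAt lam i l₀ (mu i),
      flattenAt_mem_compactConfusingSetAt hlam hil₀ (fun j hj => (hv j hj).trans hcase.le)
        ⟨hmlo i, hmhi ▸ (hkstar i hikstar).le⟩ (hfar l₀ hil₀).1 (hfar l₀ hil₀).2,
      flattenAt_mem_uIcc left_mem_uIcc (mem_uIcc.mpr (Or.inr ⟨hl₀.le, hmu_le⟩)),
      fun h => hl₀.ne' ?_⟩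
    simpa [flattenAt] using congrFun h l₀

theorem modes_location_general {K m : ℕ} (G : SimpleGraph (Fin K))
    (mu : Fin K → ℝ) (kstar : Fin K) (mlo mhi : ℝ)
    (hkstar : ∀ j, j ≠ kstar → mu j < mu kstar)
    (hmhi : mhi = mu kstar) (hmlo : ∀ i, mlo ≤ mu i)
    (k : Fin K)
    (η : Fin K → ℝ) (hη : ∀ j, 0 < η j)
    (d : Fin K → ℝ → ℝ → ℝ)
    (hdanti : ∀ j (x : ℝ), StrictAntiOn (d j x) (Set.Iic x))
    (hdmono : ∀ j (x : ℝ), StrictMonoOn (d j x) (Set.Ici x))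
    (lamstar : Fin K → ℝ)
    (hmem : lamstar ∈ CompactConfusingSetAt G m mu mlo mhi kstar k)
    (hmin : ∀ lam ∈ CompactConfusingSetAt G m mu mlo mhi kstar k,
      ∑ j, η j * d j (mu j) (lamstar j) ≤ ∑ j, η j * d j (mu j) (lam j)) :
    ∀ i, IsMode G lamstar i → i = k ∨ IsMode G mu i := by
  intro i hi
  by_contra hcon
  obtain ⟨hik, himu⟩ := not_or.mp hcon
  obtain ⟨lam', hlam', hbetween, hne⟩ :=
    exists_closer_of_isMode_of_not_isMode hkstar hmhi hmlo hmem hi hik himu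
  exact (hmin lam' hlam').not_gt (weighted_sum_lt_of_mem_uIcc hη hdanti hdmono hbetween hne)

/-- Modes location: if `λ*` minimizes `η^⊤ d(μ,·)` over `B'_k(m,μ)` with `k ∉ N(μ)`,
then every mode of `λ*` other than `k` is a mode of `μ`. -/
theorem modes_location {K m : ℕ} (G : SimpleGraph (Fin K))
    (mu : Fin K → ℝ) (kstar : Fin K) (mlo mhi : ℝ)
    (hmu : mu ∈ AtMostModal G m)
    (hkstar : ∀ j, j ≠ kstar → mu j < mu kstar)
    (hmhi : mhi = mu kstar) (hmlo : ∀ i, mlo ≤ mu i)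
    (k : Fin K) (hk : k ≠ kstar) (hkN : k ∉ ModeNeighborhood G mu)
    (η : Fin K → ℝ) (hη : ∀ j, 0 < η j)
    (d : Fin K → ℝ → ℝ → ℝ)
    (hd0 : ∀ j x y, 0 ≤ d j x y)
    (hdcont : ∀ j (x : ℝ), Continuous (d j x))
    (hdzero : ∀ j (x : ℝ), d j x x = 0)
    (hdanti : ∀ j (x : ℝ), StrictAntiOn (d j x) (Set.Iic x))
    (hdmono : ∀ j (x : ℝ), StrictMonoOn (d j x) (Set.Ici x))
    (lamstar : Fin K → ℝ)
    (hmem : lamstar ∈ CompactConfusingSetAt G m mu mlo mhi kstar k)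
    (hmin : ∀ lam ∈ CompactConfusingSetAt G m mu mlo mhi kstar k,
      ∑ j, η j * d j (mu j) (lamstar j) ≤ ∑ j, η j * d j (mu j) (lam j)) :
    ∀ i, IsMode G lamstar i → i = k ∨ IsMode G mu i :=
  modes_location_general G mu kstar mlo mhi hkstar hmhi hmlo k η hη d hdanti hdmono lamstar hmem
    hmin
end

section
/- Let λ* be a minimizer of λ ↦ η^⊤ d(μ,λ) over B'_k(m,μ) and let i ≠ k be a mode of λ*. Then λ*_i = μ_i, and for every neighbor ℓ of i, λ*_ℓ ≥ μ_ℓ. (That is, at a mode of the most confusing parameter, the parameter agrees with μ and dominates μ on the mode's neighborhood.) -/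
open Set Function

/-! A coordinate of `λ*` other than `k`, `k*` can be moved alone without leaving `B'_k(m,μ)`
as long as the move creates no new mode, and it changes the objective only through
`d_j(μ_j, ·)`. Moving `λ*_i` towards `μ_i` while keeping it above all neighbours of `i` creates no
new mode; neither does raising a neighbour `λ*_ℓ < μ_ℓ` while keeping it below `λ*_i` (and
`λ*_ℓ < λ*_i ≤ μ*` rules out `ℓ ∈ {k, k*}`). Both moves strictly decrease `d_j(μ_j, ·)`,
contradicting minimality. -/

lemma exists_lt_forall_le_of_finite {ι : Type*} [Finite ι] {a : ι → ℝ} {b : ℝ}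
    (h : ∀ l, a l < b) : ∃ c < b, ∀ l, a l ≤ c := by
  cases isEmpty_or_nonempty ι
  · exact ⟨b - 1, by linarith, isEmptyElim⟩
  · obtain ⟨l₀, hl₀⟩ := Finite.exists_max a
    exact ⟨a l₀, h l₀, hl₀⟩

lemma eq_of_forall_apply_le_of_strictAntiOn_of_strictMonoOn {f : ℝ → ℝ} {x y a b c : ℝ}
    (hanti : StrictAntiOn f (Iic x)) (hmono : StrictMonoOn f (Ici x)) (hx : x ∈ Icc a b)
    (hy : y ∈ Icc a b) (hcy : c < y) (hmin : ∀ t ∈ Icc a b, c < t → f y ≤ f t) : y = x := by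
  rcases lt_trichotomy y x with hyx | hyx | hxy
  · exact absurd (hmin x hx (hcy.trans hyx)) (hanti hyx.le self_mem_Iic hyx).not_ge
  · exact hyx
  · obtain ⟨t, hxt, hty⟩ := exists_between (max_lt hxy hcy)
    obtain ⟨hxt, hct⟩ := max_lt_iff.mp hxt
    exact absurd (hmin t ⟨hx.1.trans hxt.le, hty.le.trans hy.2⟩ hct)
      (hmono (mem_Ici.mpr hxt.le) (mem_Ici.mpr (hxt.trans hty).le) hty).not_ge

lemma le_of_forall_apply_le_of_strictAntiOn {f : ℝ → ℝ} {x y b : ℝ}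
    (hanti : StrictAntiOn f (Iic x)) (hyb : y < b) (hmin : ∀ t, y < t → t < b → f y ≤ f t) :
    x ≤ y := by
  by_contra! hyx
  obtain ⟨t, hyt, htb⟩ := exists_between (lt_min hyx hyb)
  exact (hmin t hyt (htb.trans_le (min_le_right _ _))).not_gt
    (hanti hyx.le (mem_Iic.mpr (htb.le.trans (min_le_left _ _))) hyt)

lemma Fintype.sum_mul_update_lt {ι : Type*} [Fintype ι] [DecidableEq ι] (w : ι → ℝ)
    (f : ι → ℝ → ℝ) (x : ι → ℝ) {p : ι} {t : ℝ} (hw : 0 < w p) (ht : f p t < f p (x p)) :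
    ∑ j, w j * f j (update x p t j) < ∑ j, w j * f j (x j) := by
  refine Finset.sum_lt_sum (fun j _ => ?_) ⟨p, Finset.mem_univ p, ?_⟩
  · rcases eq_or_ne j p with rfl | hjp
    · rw [update_self]
      exact mul_le_mul_of_nonneg_left ht.le hw.le
    · rw [update_of_ne hjp]
  · rw [update_self]
    exact mul_lt_mul_of_pos_left ht hw

lemma IsMinOn.le_of_update_mem {ι : Type*} [Fintype ι] [DecidableEq ι] {w : ι → ℝ}
    {f : ι → ℝ → ℝ} {S : Set (ι → ℝ)} {x : ι → ℝ}
    (hmin : IsMinOn (fun y => ∑ j, w j * f j (y j)) S x) {p : ι} (hw : 0 < w p) {t : ℝ}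
    (ht : update x p t ∈ S) : f p (x p) ≤ f p t :=
  not_lt.mp fun hlt => (isMinOn_iff.mp hmin _ ht).not_gt (Fintype.sum_mul_update_lt w f x hw hlt)

section Modes

variable {K m : ℕ} {G : SimpleGraph (Fin K)} {lam : Fin K → ℝ}

lemma mem_atMostModal_of_setOf_isMode_subset {lam' : Fin K → ℝ} (h : lam ∈ AtMostModal G m)
    (hsub : {j | IsMode G lam' j} ⊆ {j | IsMode G lam j}) : lam' ∈ AtMostModal G m :=
  (Set.ncard_le_ncard hsub (Set.toFinite _)).trans h

lemma setOf_isMode_update_subset_of_isMode {i : Fin K} {t : ℝ} (hi : IsMode G lam i)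
    (ht : ∀ l, G.Adj i l → lam l < t) :
    {j | IsMode G (update lam i t) j} ⊆ {j | IsMode G lam j} := by
  intro j hj
  rcases eq_or_ne j i with rfl | hji
  · exact hi
  by_cases hij : G.Adj i j
  · have h := hj i hij.symm
    rw [update_self, update_of_ne hji] at h
    exact absurd (ht j hij) h.not_gt
  · intro l hl
    have hli : l ≠ i := by
      rintro rfl
      exact hij hl.symm
    simpa only [update_of_ne hli, update_of_ne hji] using hj l hl

lemma setOf_isMode_update_subset_of_lt {i l : Fin K} {t : ℝ} (hlt : lam l ≤ t)
    (hli : G.Adj l i) (hti : t < lam i) :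
    {j | IsMode G (update lam l t) j} ⊆ {j | IsMode G lam j} := by
  intro j hj
  rcases eq_or_ne j l with rfl | hjl
  · have h := hj i hli
    rw [update_self, update_of_ne hli.ne'] at h
    exact absurd hti h.not_gt
  · intro p hp
    have h := hj p hp
    rw [update_of_ne hjl] at h
    rcases eq_or_ne p l with rfl | hpl
    · rw [update_self] at h
      exact hlt.trans_lt h
    · rwa [update_of_ne hpl] at h

lemma update_mem_compactConfusingSetAt {mu : Fin K → ℝ} {mlo mhi : ℝ} {kstar k p : Fin K}
    {t : ℝ} (hlam : lam ∈ CompactConfusingSetAt G m mu mlo mhi kstar k) (hpk : p ≠ k)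
    (hpks : p ≠ kstar) (ht : t ∈ Icc mlo mhi) (hmod : update lam p t ∈ AtMostModal G m) :
    update lam p t ∈ CompactConfusingSetAt G m mu mlo mhi kstar k := by
  obtain ⟨hbox, -, hk, hks⟩ := hlam
  refine ⟨fun j => ?_, hmod, by rwa [update_of_ne hpk.symm], by rwa [update_of_ne hpks.symm]⟩
  rcases eq_or_ne j p with rfl | hjp
  · rwa [update_self]
  · rw [update_of_ne hjp]
    exact hbox j

end Modes

theorem mode_of_minimizer_agrees_with_mu_general {K m : ℕ} (G : SimpleGraph (Fin K))
    (mu : Fin K → ℝ) (kstar : Fin K) (mlo mhi : ℝ)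
    (hkstar : ∀ j, j ≠ kstar → mu j < mu kstar)
    (hmhi : mhi = mu kstar) (hmlo : ∀ i, mlo ≤ mu i)
    (k : Fin K)
    (η : Fin K → ℝ) (hη : ∀ j, 0 < η j)
    (d : Fin K → ℝ → ℝ → ℝ)
    (hdanti : ∀ j (x : ℝ), StrictAntiOn (d j x) (Set.Iic x))
    (hdmono : ∀ j (x : ℝ), StrictMonoOn (d j x) (Set.Ici x))
    (lamstar : Fin K → ℝ)
    (hmem : lamstar ∈ CompactConfusingSetAt G m mu mlo mhi kstar k)
    (hmin : ∀ lam ∈ CompactConfusingSetAt G m mu mlo mhi kstar k,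
      ∑ j, η j * d j (mu j) (lamstar j) ≤ ∑ j, η j * d j (mu j) (lam j)) :
    ∀ i, i ≠ k → IsMode G lamstar i →
      lamstar i = mu i ∧ ∀ l, G.Adj i l → mu l ≤ lamstar l := by
  intro i hik hi
  obtain ⟨hbox, hmodal, hk, hks⟩ := hmem
  have hmu_le : ∀ j, mu j ≤ mhi := fun j => by
    rcases eq_or_ne j kstar with rfl | hj
    exacts [hmhi.ge, (hkstar j hj).le.trans hmhi.ge]
  have hopt : ∀ p t, p ≠ k → p ≠ kstar → t ∈ Icc mlo mhi →
      update lamstar p t ∈ AtMostModal G m → d p (mu p) (lamstar p) ≤ d p (mu p) t :=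
    fun p t hpk hpks ht hmod => (isMinOn_iff.mpr hmin).le_of_update_mem (hη p)
      (update_mem_compactConfusingSetAt ⟨hbox, hmodal, hk, hks⟩ hpk hpks ht hmod)
  refine ⟨?_, fun l hl => ?_⟩
  · rcases eq_or_ne i kstar with rfl | hiks
    · rw [hks, hmhi]
    obtain ⟨c, hc, hc_adj⟩ :=
      exists_lt_forall_le_of_finite fun l : {l // G.Adj i l} => hi l l.2
    exact eq_of_forall_apply_le_of_strictAntiOn_of_strictMonoOn (hdanti i (mu i))
      (hdmono i (mu i)) ⟨hmlo i, hmu_le i⟩ (hbox i) hc fun t ht hct => hopt i t hik hiks ht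
        (mem_atMostModal_of_setOf_isMode_subset hmodal (setOf_isMode_update_subset_of_isMode hi
          fun l hl => (hc_adj ⟨l, hl⟩).trans_lt hct))
  · have hl_lt : lamstar l < mhi := (hi l hl).trans_le (hbox i).2
    exact le_of_forall_apply_le_of_strictAntiOn (hdanti l (mu l)) (hi l hl) fun t hlt hti =>
      hopt l t (by rintro rfl; exact hl_lt.ne hk) (by rintro rfl; exact hl_lt.ne hks)
        ⟨(hbox l).1.trans hlt.le, hti.le.trans (hbox i).2⟩
        (mem_atMostModal_of_setOf_isMode_subset hmodal
          (setOf_isMode_update_subset_of_lt hlt.le hl.symm hti))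

/-- At any mode `i ≠ k` of the minimizer `λ*` of `η^⊤ d(μ,·)` over `B'_k(m,μ)`,
`λ*` agrees with `μ` at `i` and dominates `μ` on the neighborhood of `i`. -/
theorem mode_of_minimizer_agrees_with_mu {K m : ℕ} (G : SimpleGraph (Fin K))
    (mu : Fin K → ℝ) (kstar : Fin K) (mlo mhi : ℝ)
    (hmu : mu ∈ AtMostModal G m)
    (hkstar : ∀ j, j ≠ kstar → mu j < mu kstar)
    (hmhi : mhi = mu kstar) (hmlo : ∀ i, mlo ≤ mu i)
    (k : Fin K) (hk : k ≠ kstar) (hkN : k ∉ ModeNeighborhood G mu)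
    (η : Fin K → ℝ) (hη : ∀ j, 0 < η j)
    (d : Fin K → ℝ → ℝ → ℝ)
    (hd0 : ∀ j x y, 0 ≤ d j x y)
    (hdcont : ∀ j (x : ℝ), Continuous (d j x))
    (hdzero : ∀ j (x : ℝ), d j x x = 0)
    (hdanti : ∀ j (x : ℝ), StrictAntiOn (d j x) (Set.Iic x))
    (hdmono : ∀ j (x : ℝ), StrictMonoOn (d j x) (Set.Ici x))
    (lamstar : Fin K → ℝ)
    (hmem : lamstar ∈ CompactConfusingSetAt G m mu mlo mhi kstar k)
    (hmin : ∀ lam ∈ CompactConfusingSetAt G m mu mlo mhi kstar k,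
      ∑ j, η j * d j (mu j) (lamstar j) ≤ ∑ j, η j * d j (mu j) (lam j)) :
    ∀ i, i ≠ k → IsMode G lamstar i →
      lamstar i = mu i ∧ ∀ l, G.Adj i l → mu l ≤ lamstar l :=
  mode_of_minimizer_agrees_with_mu_general G mu kstar mlo mhi hkstar hmhi hmlo k η hη d hdanti
    hdmono lamstar hmem hmin
end

section
/- Suppose for each k with Δ_k > 0 we set η_k = 1/d_k(μ_k, μ*), with η ≥ 0 and η_j = 0 when Δ_j = 0 and j ≠ k*(μ). Then any λ ∈ B(m,μ) has some coordinate k ≠ k*(μ) with λ_k > μ*, and hence η^⊤ d(μ,λ) > 1; so η is a feasible solution of the Graves-Lai program. Consequently, there exists an optimal solution η* of the Graves-Lai program with ‖η*‖_∞ ≤ (1/Δ_min) · Σ_{k: Δ_k>0} Δ_k/d_k(μ_k, μ*). -/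
/-- The set `B(m,μ)` of confusing parameters. -/
def ConfusingSet {K : ℕ} (G : SimpleGraph (Fin K)) (m : ℕ) (mu : Fin K → ℝ)
    (kstar : Fin K) : Set (Fin K → ℝ) :=
  {lam | lam ∈ AtMostModal G m ∧ lam kstar = mu kstar ∧
    ∃ j, j ≠ kstar ∧ ∀ i, i ≠ j → lam i < lam j}

open Classical in
/-- Setting `η_k = 1/d_k(μ_k,μ*)` for each suboptimal arm gives a feasible solution
of the Graves-Lai program; consequently there is an optimal solution `η*` with
`‖η*‖_∞ ≤ (1/Δ_min) Σ_{k : Δ_k>0} Δ_k / d_k(μ_k,μ*)`. -/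
theorem eta_bound {K m : ℕ} (G : SimpleGraph (Fin K))
    (mu : Fin K → ℝ) (kstar : Fin K)
    (hmu : mu ∈ AtMostModal G m)
    (hkstar : ∀ j, j ≠ kstar → mu j < mu kstar)
    (Δ : Fin K → ℝ) (hΔ : ∀ k, Δ k = mu kstar - mu k)
    (gmin : ℝ) (hgmin : ∃ k, 0 < Δ k ∧ Δ k = gmin)
    (hgminle : ∀ k, 0 < Δ k → gmin ≤ Δ k)
    (d : Fin K → ℝ → ℝ → ℝ)
    (hd0 : ∀ j x y, 0 ≤ d j x y)
    (hdzero : ∀ j (x : ℝ), d j x x = 0)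
    (hdmono : ∀ j (x : ℝ), StrictMonoOn (d j x) (Set.Ici x))
    (η : Fin K → ℝ) (hη : ∀ j, 0 ≤ η j)
    (hηdef : ∀ k, 0 < Δ k → η k = 1 / d k (mu k) (mu kstar))
    (hηzero : ∀ j, Δ j = 0 → j ≠ kstar → η j = 0) :
    (∀ lam ∈ ConfusingSet G m mu kstar, ∃ k, k ≠ kstar ∧ mu kstar < lam k) ∧
    (∀ lam ∈ ConfusingSet G m mu kstar, 1 < ∑ j, η j * d j (mu j) (lam j)) ∧
    (∃ ηstar : Fin K → ℝ,
      (∀ j, 0 ≤ ηstar j) ∧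
      (∀ lam ∈ ConfusingSet G m mu kstar, 1 ≤ ∑ j, ηstar j * d j (mu j) (lam j)) ∧
      (∀ η' : Fin K → ℝ, (∀ j, 0 ≤ η' j) →
        (∀ lam ∈ ConfusingSet G m mu kstar, 1 ≤ ∑ j, η' j * d j (mu j) (lam j)) →
        ∑ j, ηstar j * Δ j ≤ ∑ j, η' j * Δ j) ∧
      (∀ j, ηstar j ≤ (1 / gmin) *
        ∑ k ∈ Finset.univ.filter (fun k => 0 < Δ k), Δ k / d k (mu k) (mu kstar))) := by
  classical
  obtain ⟨k0, hk0pos, hk0eq⟩ := hgmin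
  have hgpos : 0 < gmin := hk0eq ▸ hk0pos
  have hΔks : Δ kstar = 0 := by rw [hΔ]; ring
  have hΔpos : ∀ j, j ≠ kstar → 0 < Δ j := fun j hj => by
    rw [hΔ]; linarith [hkstar j hj]
  have hΔnn : ∀ j, 0 ≤ Δ j := fun j => by
    by_cases h : j = kstar
    · rw [h, hΔks]
    · exact (hΔpos j h).le
  have hmule : ∀ j, mu j ≤ mu kstar := fun j => by
    by_cases h : j = kstar
    · rw [h]
    · exact (hkstar j h).le
  have hdpos : ∀ j, j ≠ kstar → 0 < d j (mu j) (mu kstar) := fun j hj => by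
    have := hdmono j (mu j) Set.self_mem_Ici (Set.mem_Ici.mpr (hmule j)) (hkstar j hj)
    rwa [hdzero] at this
  have part1 : ∀ lam ∈ ConfusingSet G m mu kstar, ∃ k, k ≠ kstar ∧ mu kstar < lam k := by
    rintro lam ⟨-, hks, j, hj, hmax⟩
    exact ⟨j, hj, hks ▸ hmax kstar (Ne.symm hj)⟩
  have part2 : ∀ lam ∈ ConfusingSet G m mu kstar, 1 < ∑ j, η j * d j (mu j) (lam j) := by
    intro lam hlam
    obtain ⟨k, hk, hgt⟩ := part1 lam hlam
    have ha := hdpos k hk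
    have hb : d k (mu k) (mu kstar) < d k (mu k) (lam k) :=
      hdmono k (mu k) (Set.mem_Ici.mpr (hmule k))
        (Set.mem_Ici.mpr (le_trans (hmule k) hgt.le)) hgt
    have hterm : 1 < η k * d k (mu k) (lam k) := by
      rw [hηdef k (hΔpos k hk), one_div_mul_eq_div, one_lt_div ha]
      exact hb
    calc (1:ℝ) < η k * d k (mu k) (lam k) := hterm
      _ ≤ ∑ j, η j * d j (mu j) (lam j) :=
        Finset.single_le_sum (fun j _ => mul_nonneg (hη j) (hd0 j _ _)) (Finset.mem_univ k)
  refine ⟨part1, part2, ?_⟩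
  set C := ConfusingSet G m mu kstar with hC
  set f : (Fin K → ℝ) → ℝ := fun x => ∑ j, x j * Δ j with hf
  set V : ℝ := ∑ k ∈ Finset.univ.filter (fun k => 0 < Δ k), Δ k / d k (mu k) (mu kstar) with hV
  have hVnn : 0 ≤ V := Finset.sum_nonneg fun k _ => div_nonneg (hΔnn k) (hd0 k _ _)
  have hfcont : Continuous f := by
    apply continuous_finset_sum
    exact fun j _ => (continuous_apply j).mul continuous_const
  -- the kstar coordinate does not matter for feasibility
  have hswap : ∀ lam ∈ C, ∀ x : Fin K → ℝ,
      (∑ j, (Function.update x kstar 0) j * d j (mu j) (lam j)) =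
        ∑ j, x j * d j (mu j) (lam j) := by
    intro lam hlam x
    apply Finset.sum_congr rfl
    intro j _
    by_cases hj : j = kstar
    · subst hj
      have hc : d j (mu j) (lam j) = 0 := by rw [hlam.2.1, hdzero]
      rw [hc, mul_zero, mul_zero]
    · rw [Function.update_of_ne hj]
  have hfswap : ∀ x : Fin K → ℝ, f (Function.update x kstar 0) = f x := by
    intro x
    apply Finset.sum_congr rfl
    intro j _
    by_cases hj : j = kstar
    · subst hj; rw [hΔks, mul_zero, mul_zero]
    · rw [Function.update_of_ne hj]
  set η₀ : Fin K → ℝ := Function.update η kstar 0 with hη₀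
  have hη₀nn : ∀ j, 0 ≤ η₀ j := by
    intro j
    by_cases hj : j = kstar
    · subst hj; rw [hη₀, Function.update_self]
    · rw [hη₀, Function.update_of_ne hj]; exact hη j
  have hη₀feas : ∀ lam ∈ C, 1 ≤ ∑ j, η₀ j * d j (mu j) (lam j) := by
    intro lam hlam
    rw [hη₀, hswap lam hlam]
    exact (part2 lam hlam).le
  have hη₀obj : f η₀ = V := by
    show (∑ j, η₀ j * Δ j) = V
    have h0 : ∀ x ∈ Finset.univ, x ∉ Finset.univ.filter (fun k => 0 < Δ k) →
        η₀ x * Δ x = 0 := by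
      intro x _ hx
      simp only [Finset.mem_filter, Finset.mem_univ, true_and, not_lt] at hx
      have hxk : x = kstar := by
        by_contra hne
        exact absurd hx (not_le.mpr (hΔpos x hne))
      rw [hxk, hη₀, Function.update_self, zero_mul]
    rw [hV, ← Finset.sum_subset (Finset.subset_univ _) h0]
    apply Finset.sum_congr rfl
    intro j hj
    simp only [Finset.mem_filter, Finset.mem_univ, true_and] at hj
    have hjk : j ≠ kstar := fun h => by rw [h, hΔks] at hj; exact lt_irrefl 0 hj
    rw [hη₀, Function.update_of_ne hjk, hηdef j hj, one_div_mul_eq_div]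
  set S : Set (Fin K → ℝ) := {x | (∀ j, 0 ≤ x j) ∧ x kstar = 0 ∧
    (∀ lam ∈ C, 1 ≤ ∑ j, x j * d j (mu j) (lam j)) ∧ f x ≤ V} with hS
  have hη₀S : η₀ ∈ S := ⟨hη₀nn, by rw [hη₀, Function.update_self], hη₀feas, le_of_eq hη₀obj⟩
  have hsub : S ⊆ Set.Icc (0 : Fin K → ℝ) (fun _ => V / gmin) := by
    rintro x ⟨hxnn, hxk, -, hxobj⟩
    refine ⟨fun j => hxnn j, fun j => ?_⟩
    by_cases hj : j = kstar
    · subst hj; rw [hxk]; exact div_nonneg hVnn hgpos.le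
    · have h1 : x j * Δ j ≤ f x :=
        Finset.single_le_sum (fun i _ => mul_nonneg (hxnn i) (hΔnn i)) (Finset.mem_univ j)
      have h2 : gmin * x j ≤ x j * Δ j := by
        rw [mul_comm]
        exact mul_le_mul_of_nonneg_left (hgminle j (hΔpos j hj)) (hxnn j)
      rw [le_div_iff₀ hgpos]
      nlinarith
  have hclosed : IsClosed S := by
    have h1 : IsClosed {x : Fin K → ℝ | ∀ j, 0 ≤ x j} := by
      have : {x : Fin K → ℝ | ∀ j, 0 ≤ x j} = ⋂ j, {x | 0 ≤ x j} := by ext x; simp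
      rw [this]
      exact isClosed_iInter fun j => isClosed_le continuous_const (continuous_apply j)
    have h2 : IsClosed {x : Fin K → ℝ | x kstar = 0} :=
      isClosed_eq (continuous_apply kstar) continuous_const
    have h3 : IsClosed {x : Fin K → ℝ | ∀ lam ∈ C, 1 ≤ ∑ j, x j * d j (mu j) (lam j)} := by
      have : {x : Fin K → ℝ | ∀ lam ∈ C, 1 ≤ ∑ j, x j * d j (mu j) (lam j)} =
          ⋂ lam ∈ C, {x | 1 ≤ ∑ j, x j * d j (mu j) (lam j)} := by ext x; simp
      rw [this]
      exact isClosed_biInter fun lam _ =>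
        isClosed_le continuous_const
          (continuous_finset_sum _ fun j _ => (continuous_apply j).mul continuous_const)
    have h4 : IsClosed {x : Fin K → ℝ | f x ≤ V} := isClosed_le hfcont continuous_const
    have : S = {x : Fin K → ℝ | ∀ j, 0 ≤ x j} ∩ ({x | x kstar = 0} ∩
        ({x | ∀ lam ∈ C, 1 ≤ ∑ j, x j * d j (mu j) (lam j)} ∩ {x | f x ≤ V})) := by
      ext x
      simp only [hS, Set.mem_setOf_eq, Set.mem_inter_iff]
    rw [this]
    exact h1.inter (h2.inter (h3.inter h4))
  have hcompact : IsCompact S := IsCompact.of_isClosed_subset isCompact_Icc hclosed hsub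
  obtain ⟨ηstar, hmem, hminOn⟩ := hcompact.exists_isMinOn ⟨η₀, hη₀S⟩ hfcont.continuousOn
  have hmin : ∀ y ∈ S, f ηstar ≤ f y := fun y hy => hminOn hy
  refine ⟨ηstar, hmem.1, hmem.2.2.1, ?_, ?_⟩
  · intro η' hη'nn hη'feas
    set η'' : Fin K → ℝ := Function.update η' kstar 0 with hη''
    have hfeq : f η'' = f η' := hfswap η'
    have hfeas'' : ∀ lam ∈ C, 1 ≤ ∑ j, η'' j * d j (mu j) (lam j) := by
      intro lam hlam
      rw [hη'', hswap lam hlam]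
      exact hη'feas lam hlam
    have hnn'' : ∀ j, 0 ≤ η'' j := by
      intro j
      by_cases hj : j = kstar
      · subst hj; rw [hη'', Function.update_self]
      · rw [hη'', Function.update_of_ne hj]; exact hη'nn j
    show f ηstar ≤ f η'
    by_cases hcase : f η'' ≤ V
    · have : η'' ∈ S := ⟨hnn'', by rw [hη'', Function.update_self], hfeas'', hcase⟩
      calc f ηstar ≤ f η'' := hmin η'' this
        _ = f η' := hfeq
    · have h1 : f ηstar ≤ V := hmem.2.2.2
      push_neg at hcase
      linarith [hfeq]
  · intro j
    have := (hsub hmem).2 j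
    rw [one_div_mul_eq_div]
    exact this
end
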